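/- Let H be an n×n complex Hermitian matrix with simple spectrum, orthonormal eigenbasis v_1, …, v_n and eigenvalues λ_1 < ⋯ < λ_n, and let ψ0 ∈ ℂ^n be a unit vector. Then for every T > 0, the total variation distance between the time-averaged distribution and the limiting distribution satisfies Σ_f |P_f(T) − P_f(∞)| ≤ (2/T) · Σ_{i ≠ l} |⟨v_i, ψ0⟩| · |⟨v_l, ψ0⟩| / |λ_i − λ_l|, the outer sum over all standard basis vectors f and the right-hand sum over all ordered pairs i ≠ l. -/

import Mathlib

open scoped BigOperators
open scoped Nat
open scoped Matrix

open NormedSpace in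
lemma exp_mulVec_eigen {n : ℕ} (A : Matrix (Fin n) (Fin n) ℂ) (μ : ℂ) (w : Fin n → ℂ)
    (h : A.mulVec w = μ • w) :
    (exp A).mulVec w = Complex.exp μ • w := by
  letI : SeminormedRing (Matrix (Fin n) (Fin n) ℂ) := Matrix.linftyOpSemiNormedRing
  letI : NormedRing (Matrix (Fin n) (Fin n) ℂ) := Matrix.linftyOpNormedRing
  letI : NormedAlgebra ℂ (Matrix (Fin n) (Fin n) ℂ) := Matrix.linftyOpNormedAlgebra
  have hpow : ∀ k : ℕ, (A ^ k).mulVec w = μ ^ k • w := by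
    intro k; induction k with
    | zero => simp [Matrix.one_mulVec]
    | succ k ih =>
      rw [pow_succ', pow_succ', ← Matrix.mulVec_mulVec, ih, Matrix.mulVec_smul, h, smul_smul, mul_comm μ]
  let L : Matrix (Fin n) (Fin n) ℂ →ₗ[ℂ] (Fin n → ℂ) :=
    { toFun := fun M => M.mulVec w
      map_add' := fun M N => Matrix.add_mulVec M N w
      map_smul' := fun c M => Matrix.smul_mulVec c M w }
  let Lc := LinearMap.toContinuousLinearMap L
  have hsum : Summable (fun k : ℕ => (k ! : ℂ)⁻¹ • A ^ k) := expSeries_summable' A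
  have h1 : (exp A).mulVec w = Lc (∑' k : ℕ, (k ! : ℂ)⁻¹ • A ^ k) := by
    rw [exp_eq_tsum ℂ]
    rfl
  rw [h1, Lc.map_tsum hsum]
  have h2 : ∀ k : ℕ, Lc ((k ! : ℂ)⁻¹ • A ^ k) = ((k ! : ℂ)⁻¹ • μ ^ k) • w := by
    intro k
    show ((k ! : ℂ)⁻¹ • A ^ k).mulVec w = _
    rw [Matrix.smul_mulVec, hpow, smul_smul, smul_eq_mul]
  simp_rw [h2]
  rw [Summable.tsum_smul_const, Complex.exp_eq_exp_ℂ, exp_eq_tsum ℂ]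
  exact expSeries_summable' (𝕂 := ℂ) μ

lemma completeness_aux {n : ℕ} (v : Fin n → Fin n → ℂ)
    (hortho : ∀ i j, ∑ k, star (v i k) * v j k = if i = j then 1 else 0)
    (ψ0 : Fin n → ℂ) (k : Fin n) :
    ∑ i, (∑ m, star (v i m) * ψ0 m) * v i k = ψ0 k := by
  classical
  set U : Matrix (Fin n) (Fin n) ℂ := Matrix.of (fun k i => v i k) with hU
  have hUU : Uᴴ * U = 1 := by
    ext i j
    simpa [Matrix.mul_apply, Matrix.conjTranspose_apply, Matrix.one_apply, hU] using hortho i j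
  have hUU' : U * Uᴴ = 1 := mul_eq_one_comm.mp hUU
  have h := congrFun (congrArg (fun M : Matrix (Fin n) (Fin n) ℂ => M.mulVec ψ0) hUU') k
  simp only [Matrix.one_mulVec] at h
  rw [← h]
  simp only [Matrix.mulVec, Matrix.mul_apply, dotProduct, Matrix.conjTranspose_apply,
    hU, Matrix.of_apply, Finset.sum_mul]
  rw [Finset.sum_comm]
  refine Finset.sum_congr rfl fun i _ => Finset.sum_congr rfl fun m _ => by ring

/-- For an `n × n` Hermitian matrix `H` with simple spectrum,
orthonormal eigenbasis `v` and strictly increasing eigenvalues `lam`, and a unit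
initial state `ψ0`, for every `T > 0` the total variation distance between the
time-averaged distribution and the limiting distribution is at most
`(2/T) ⬝ ∑_{i ≠ l} |⟨v i, ψ0⟩| |⟨v l, ψ0⟩| / |lam i − lam l|`. -/
theorem quantum_walk_total_variation_distance_bound
    {n : ℕ} (hn : 2 ≤ n) (H : Matrix (Fin n) (Fin n) ℂ) (hH : H.IsHermitian)
    (lam : Fin n → ℝ) (hlam : StrictMono lam)
    (v : Fin n → (Fin n → ℂ))
    (hortho : ∀ i j, ∑ k, star (v i k) * v j k = if i = j then 1 else 0)
    (heig : ∀ i, H.mulVec (v i) = (lam i : ℂ) • v i)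
    (ψ0 : Fin n → ℂ) (hψ0 : ∑ k, ‖ψ0 k‖ ^ 2 = 1)
    (T : ℝ) (hT : 0 < T) :
    ∑ f : Fin n,
      |((1 / T) * ∫ t in (0:ℝ)..T,
          ‖((NormedSpace.exp ((-(t : ℂ) * Complex.I) • H)).mulVec ψ0) f‖ ^ 2)
        - ∑ i, ‖v i f‖ ^ 2 * ‖∑ k, star (v i k) * ψ0 k‖ ^ 2|
      ≤ (2 / T) * ∑ i, ∑ l, if i ≠ l then
          ‖∑ k, star (v i k) * ψ0 k‖ * ‖∑ k, star (v l k) * ψ0 k‖ / |lam i - lam l|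
        else 0 := by
  classical
  set c : Fin n → ℂ := fun i => ∑ k, star (v i k) * ψ0 k with hcdef
  have hc : ∀ i, (∑ k, star (v i k) * ψ0 k) = c i := fun i => rfl
  set W : Fin n → Fin n → Fin n → ℂ :=
    fun i l f => c i * (starRingEnd ℂ) (c l) * (v i f * (starRingEnd ℂ) (v l f)) with hWdef
  set g : Fin n → Fin n → ℝ → ℂ :=
    fun i l t => Complex.exp ((-Complex.I * ((lam i : ℂ) - lam l)) * t) with hgdef
  -- amplitude formula
  have hψ : ψ0 = ∑ i, c i • v i := by
    funext k
    rw [Finset.sum_apply]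
    simp only [Pi.smul_apply, smul_eq_mul]
    exact (completeness_aux v hortho ψ0 k).symm
  have hamp : ∀ (t : ℝ) (f : Fin n),
      ((NormedSpace.exp ((-(t : ℂ) * Complex.I) • H)).mulVec ψ0) f
        = ∑ i, c i * Complex.exp (-(t : ℂ) * Complex.I * lam i) * v i f := by
    intro t f
    have heA : ∀ i, ((-(t : ℂ) * Complex.I) • H).mulVec (v i)
        = ((-(t : ℂ) * Complex.I) * lam i) • v i := by
      intro i
      rw [Matrix.smul_mulVec, heig i, smul_smul]
    conv_lhs => rw [hψ]
    rw [← Matrix.mulVecLin_apply, map_sum]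
    simp only [map_smul, Matrix.mulVecLin_apply]
    rw [Finset.sum_apply]
    refine Finset.sum_congr rfl fun i _ => ?_
    rw [exp_mulVec_eigen _ _ _ (heA i)]
    simp only [Pi.smul_apply, smul_eq_mul]
    ring
  -- norm-squared expansion
  have hnormsq : ∀ (t : ℝ) (f : Fin n),
      ‖((NormedSpace.exp ((-(t : ℂ) * Complex.I) • H)).mulVec ψ0) f‖ ^ 2
        = ∑ i, ∑ l, (W i l f * g i l t).re := by
    intro t f
    rw [hamp t f]
    set a := ∑ i, c i * Complex.exp (-(t : ℂ) * Complex.I * lam i) * v i f with hadef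
    have h1 : ‖a‖ ^ 2 = (a * (starRingEnd ℂ) a).re := by
      rw [Complex.mul_conj]
      simp [Complex.sq_norm]
    rw [h1, hadef, map_sum, Finset.sum_mul]
    simp_rw [Finset.mul_sum]
    rw [Complex.re_sum]
    refine Finset.sum_congr rfl fun i _ => ?_
    rw [Complex.re_sum]
    refine Finset.sum_congr rfl fun l _ => ?_
    congr 1
    have hconjexp : (starRingEnd ℂ) (Complex.exp (-(t : ℂ) * Complex.I * lam l))
        = Complex.exp ((t : ℂ) * Complex.I * lam l) := by
      rw [← Complex.exp_conj]
      congr 1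
      simp only [map_mul, map_neg, Complex.conj_ofReal, Complex.conj_I]
      ring
    have hEE : Complex.exp (-(t : ℂ) * Complex.I * lam i) * Complex.exp ((t : ℂ) * Complex.I * lam l)
        = g i l t := by
      rw [hgdef, ← Complex.exp_add]
      congr 1
      ring
    rw [map_mul, map_mul, hconjexp, hWdef, ← hEE]
    ring
  -- the integrals J
  set J : Fin n → Fin n → ℂ := fun i l => ∫ t in (0:ℝ)..T, g i l t with hJdef
  have hgcont : ∀ i l, Continuous (g i l) := by
    intro i l
    exact Complex.continuous_exp.comp (by fun_prop)
  have hJdiag : ∀ i, J i i = (T : ℂ) := by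
    intro i
    have : ∀ t : ℝ, g i i t = 1 := by
      intro t; simp [hgdef]
    simp [hJdef, this]
  have hJoff : ∀ i l, i ≠ l → ‖J i l‖ ≤ 2 / |lam i - lam l| := by
    intro i l hil
    have hlamne : lam i ≠ lam l := fun h => hil (hlam.injective h)
    have hd : (-Complex.I * ((lam i : ℂ) - lam l)) ≠ 0 := by
      refine mul_ne_zero (neg_ne_zero.mpr Complex.I_ne_zero) ?_
      rw [sub_ne_zero]
      exact_mod_cast hlamne
    have hval : J i l = (Complex.exp ((-Complex.I * ((lam i : ℂ) - lam l)) * T) - 1)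
        / (-Complex.I * ((lam i : ℂ) - lam l)) := by
      rw [hJdef]
      simp only [hgdef]
      rw [integral_exp_mul_complex hd]
      norm_num
    rw [hval, norm_div]
    have hnum : ‖Complex.exp ((-Complex.I * ((lam i : ℂ) - lam l)) * T) - 1‖ ≤ 2 := by
      refine (norm_sub_le _ _).trans ?_
      have : ‖Complex.exp ((-Complex.I * ((lam i : ℂ) - lam l)) * T)‖ = 1 := by
        rw [Complex.norm_exp]
        have : ((-Complex.I * ((lam i : ℂ) - lam l)) * T).re = 0 := by
          simp [Complex.mul_re, Complex.mul_im]
        rw [this, Real.exp_zero]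
      rw [this, norm_one]
      norm_num
    have hden : ‖-Complex.I * ((lam i : ℂ) - lam l)‖ = |lam i - lam l| := by
      rw [norm_mul, norm_neg, Complex.norm_I, one_mul]
      rw [show ((lam i : ℂ) - lam l) = ((lam i - lam l : ℝ) : ℂ) by push_cast; ring]
      exact Complex.norm_real _
    rw [hden]
    have hpos : 0 < |lam i - lam l| := abs_pos.mpr (sub_ne_zero.mpr hlamne)
    exact div_le_div_of_nonneg_right hnum hpos.le
  -- integral of the norm squared
  have hint : ∀ f : Fin n,
      (∫ t in (0:ℝ)..T,
        ‖((NormedSpace.exp ((-(t : ℂ) * Complex.I) • H)).mulVec ψ0) f‖ ^ 2)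
      = ∑ i, ∑ l, (W i l f * J i l).re := by
    intro f
    have hI1 : ∀ i l, IntervalIntegrable (fun t => (W i l f * g i l t).re)
        MeasureTheory.volume 0 T :=
      fun i l => (Complex.continuous_re.comp ((continuous_const.mul (hgcont i l)))).intervalIntegrable 0 T
    calc (∫ t in (0:ℝ)..T,
          ‖((NormedSpace.exp ((-(t : ℂ) * Complex.I) • H)).mulVec ψ0) f‖ ^ 2)
        = ∫ t in (0:ℝ)..T, ∑ i, ∑ l, (W i l f * g i l t).re := by
          refine intervalIntegral.integral_congr fun t _ => hnormsq t f
      _ = ∑ i, ∑ l, ∫ t in (0:ℝ)..T, (W i l f * g i l t).re := by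
          rw [intervalIntegral.integral_finset_sum]
          · exact Finset.sum_congr rfl fun i _ => intervalIntegral.integral_finset_sum (fun l _ => hI1 i l)
          · intro i _
            exact (continuous_finset_sum _ fun l _ =>
              Complex.continuous_re.comp (continuous_const.mul (hgcont i l))).intervalIntegrable 0 T
      _ = ∑ i, ∑ l, (W i l f * J i l).re := by
          refine Finset.sum_congr rfl fun i _ => Finset.sum_congr rfl fun l _ => ?_
          have hInt : IntervalIntegrable (fun t => W i l f * g i l t)
              MeasureTheory.volume 0 T :=
            (continuous_const.mul (hgcont i l)).intervalIntegrable 0 T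
          have := Complex.reCLM.intervalIntegral_comp_comm hInt
          simp only [Complex.reCLM_apply] at this
          rw [this, intervalIntegral.integral_const_mul]
  -- diagonal terms
  have hWdiag : ∀ i f, (W i i f * J i i).re = T * (‖v i f‖ ^ 2 * ‖c i‖ ^ 2) := by
    intro i f
    rw [hJdiag i]
    simp only [hWdef, Complex.mul_conj]
    rw [show ((Complex.normSq (c i) : ℂ) * (Complex.normSq (v i f) : ℂ) * (T : ℂ))
        = (((Complex.normSq (c i) * Complex.normSq (v i f) * T : ℝ)) : ℂ) by push_cast; ring]
    rw [Complex.ofReal_re, Complex.normSq_eq_norm_sq, Complex.normSq_eq_norm_sq]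
    ring
  have hsplit : ∀ f, ∑ i, ∑ l, (W i l f * J i l).re
      = (∑ i, T * (‖v i f‖ ^ 2 * ‖c i‖ ^ 2))
        + ∑ i, ∑ l, (if i ≠ l then (W i l f * J i l).re else 0) := by
    intro f
    rw [← Finset.sum_add_distrib]
    refine Finset.sum_congr rfl fun i _ => ?_
    have hsp : ∀ l, (W i l f * J i l).re
        = (if i = l then (W i l f * J i l).re else 0)
          + (if i ≠ l then (W i l f * J i l).re else 0) := by
      intro l; by_cases h : i = l <;> simp [h]
    rw [Finset.sum_congr rfl (fun l _ => hsp l), Finset.sum_add_distrib, Finset.sum_ite_eq]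
    simp [hWdiag i f]
  have hT' : (T : ℝ) ≠ 0 := ne_of_gt hT
  -- off-diagonal term bound
  have hWnorm : ∀ i l f, ‖W i l f‖ = ‖c i‖ * ‖c l‖ * (‖v i f‖ * ‖v l f‖) := by
    intro i l f
    simp only [hWdef, norm_mul, RCLike.norm_conj]
  have hPf : ∀ f : Fin n,
      |(1 / T) * (∫ t in (0:ℝ)..T,
          ‖((NormedSpace.exp ((-(t : ℂ) * Complex.I) • H)).mulVec ψ0) f‖ ^ 2)
        - ∑ i, ‖v i f‖ ^ 2 * ‖c i‖ ^ 2|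
      ≤ (1 / T) * ∑ i, ∑ l, (if i ≠ l then
          ‖c i‖ * ‖c l‖ * (‖v i f‖ * ‖v l f‖) * (2 / |lam i - lam l|) else 0) := by
    intro f
    rw [hint f, hsplit f]
    have heq : (1 / T) * ((∑ i, T * (‖v i f‖ ^ 2 * ‖c i‖ ^ 2))
          + ∑ i, ∑ l, (if i ≠ l then (W i l f * J i l).re else 0))
        - ∑ i, ‖v i f‖ ^ 2 * ‖c i‖ ^ 2
        = (1 / T) * ∑ i, ∑ l, (if i ≠ l then (W i l f * J i l).re else 0) := by
      have hdd : (1 / T) * (∑ i, T * (‖v i f‖ ^ 2 * ‖c i‖ ^ 2))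
          = ∑ i, ‖v i f‖ ^ 2 * ‖c i‖ ^ 2 := by
        rw [Finset.mul_sum]
        refine Finset.sum_congr rfl fun i _ => ?_
        field_simp
      rw [mul_add, hdd]; ring
    rw [heq, abs_mul, abs_of_pos (by positivity : (0:ℝ) < 1 / T)]
    refine mul_le_mul_of_nonneg_left ?_ (by positivity)
    refine (Finset.abs_sum_le_sum_abs _ _).trans ?_
    refine Finset.sum_le_sum fun i _ => (Finset.abs_sum_le_sum_abs _ _).trans ?_
    refine Finset.sum_le_sum fun l _ => ?_
    by_cases hil : i = l
    · simp [hil]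
    · have hil' : i ≠ l := hil
      rw [if_pos hil', if_pos hil']
      refine (Complex.abs_re_le_norm _).trans ?_
      rw [norm_mul, hWnorm]
      have hnn : (0:ℝ) ≤ ‖c i‖ * ‖c l‖ * (‖v i f‖ * ‖v l f‖) := by positivity
      refine (mul_le_mul_of_nonneg_left (hJoff i l hil') hnn).trans_eq ?_
      ring
  -- Cauchy-Schwarz on the eigenvectors
  have hv2 : ∀ i, ∑ f, ‖v i f‖ ^ 2 = 1 := by
    intro i
    have h := hortho i i
    rw [if_pos rfl] at h
    have h2 : ∀ k, star (v i k) * v i k = ((‖v i k‖ ^ 2 : ℝ) : ℂ) := by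
      intro k
      rw [Complex.star_def, mul_comm, Complex.mul_conj, Complex.normSq_eq_norm_sq]
    rw [Finset.sum_congr rfl (fun k _ => h2 k)] at h
    have h3 := congrArg Complex.re h
    rw [Complex.re_sum] at h3
    simpa [← Complex.ofReal_pow, Complex.ofReal_re] using h3
  have hcs : ∀ i l, ∑ f, ‖v i f‖ * ‖v l f‖ ≤ 1 := by
    intro i l
    have h2 := Finset.sum_mul_sq_le_sq_mul_sq Finset.univ (fun f => ‖v i f‖) (fun f => ‖v l f‖)
    simp only [hv2 i, hv2 l, mul_one] at h2
    have hnn : 0 ≤ ∑ f, ‖v i f‖ * ‖v l f‖ := Finset.sum_nonneg fun f _ => by positivity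
    nlinarith
  -- final assembly
  simp only [hc]
  refine (Finset.sum_le_sum fun f _ => hPf f).trans ?_
  rw [← Finset.mul_sum]
  have hswap : (∑ f, ∑ i, ∑ l, (if i ≠ l then
        ‖c i‖ * ‖c l‖ * (‖v i f‖ * ‖v l f‖) * (2 / |lam i - lam l|) else 0))
      = ∑ i, ∑ l, (if i ≠ l then
        ‖c i‖ * ‖c l‖ * (∑ f, ‖v i f‖ * ‖v l f‖) * (2 / |lam i - lam l|) else 0) := by
    rw [Finset.sum_comm]
    refine Finset.sum_congr rfl fun i _ => ?_
    rw [Finset.sum_comm]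
    refine Finset.sum_congr rfl fun l _ => ?_
    by_cases hil : i = l
    · simp [hil]
    · have hil' : i ≠ l := hil
      simp only [if_pos hil']
      simp only [Finset.mul_sum, Finset.sum_mul]
  rw [hswap]
  rw [Finset.mul_sum, Finset.mul_sum]
  refine Finset.sum_le_sum fun i _ => ?_
  rw [Finset.mul_sum, Finset.mul_sum]
  refine Finset.sum_le_sum fun l _ => ?_
  by_cases hil : i = l
  · simp [hil]
  · have hil' : i ≠ l := hil
    rw [if_pos hil', if_pos hil']
    have hS := hcs i l
    have hS0 : 0 ≤ ∑ f, ‖v i f‖ * ‖v l f‖ := Finset.sum_nonneg fun f _ => by positivity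
    have hfac : (0:ℝ) ≤ (2 / T) * (‖c i‖ * ‖c l‖ / |lam i - lam l|) := by
      have h2T : (0:ℝ) ≤ 2 / T := div_nonneg (by norm_num) hT.le
      have : (0:ℝ) ≤ ‖c i‖ * ‖c l‖ / |lam i - lam l| :=
        div_nonneg (mul_nonneg (norm_nonneg _) (norm_nonneg _)) (abs_nonneg _)
      exact mul_nonneg h2T this
    calc (1 / T) * (‖c i‖ * ‖c l‖ * (∑ f, ‖v i f‖ * ‖v l f‖) * (2 / |lam i - lam l|))
        = (2 / T) * (‖c i‖ * ‖c l‖ / |lam i - lam l|) * (∑ f, ‖v i f‖ * ‖v l f‖) := by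
          field_simp
      _ ≤ (2 / T) * (‖c i‖ * ‖c l‖ / |lam i - lam l|) * 1 :=
          mul_le_mul_of_nonneg_left hS hfac
      _ = (2 / T) * (‖c i‖ * ‖c l‖ / |lam i - lam l|) := by ring
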